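/- arXiv:2508.13830 — 3 statements merged into one kernel-verified Lean document; each statement's English description precedes it below -/
import Mathlib

section
/- Let D be a digraph, Z ⊆ V(D) with |Z| = w, and let X ⊆ V(D) \ Z be Z-guarded. If H is a subdigraph of D that is the disjoint union of k directed paths, then the subdigraph of H induced by V(H) ∩ X has at most k + w weakly connected components. -/
variable {V : Type*}

/-- A set `S` (disjoint from `Z`) is `Z`-guarded: no directed walk in `D − Z`
starts and ends in `S` while using a vertex of `V \ (Z ∪ S)`. -/
def DiGuarded (A : V → V → Prop) (Z S : Set V) : Prop :=
  ¬ ∃ (l : List V) (h : l ≠ []),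
      l.Chain' A ∧ (∀ v ∈ l, v ∉ Z) ∧
      l.head h ∈ S ∧ l.getLast h ∈ S ∧ ∃ v ∈ l, v ∉ Z ∧ v ∉ S

/-- `S` is `w`-guarded: `Z`-guarded for some `Z` of size at most `w` disjoint from `S`. -/
def DiWGuarded (A : V → V → Prop) (w : ℕ) (S : Set V) : Prop :=
  ∃ Z : Set V, Z.Finite ∧ Z.ncard ≤ w ∧ Disjoint S Z ∧ DiGuarded A Z S

/-- There is a directed walk from `u` to `v`. -/
def DiReaches (A : V → V → Prop) (u v : V) : Prop :=
  ∃ (l : List V) (h : l ≠ []), l.Chain' A ∧ l.head h = u ∧ l.getLast h = v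

/-- There is a directed walk from `x` to `y` in `D − v`. -/
def DiReachesAvoid (A : V → V → Prop) (v x y : V) : Prop :=
  ∃ (l : List V) (h : l ≠ []), l.Chain' A ∧ (∀ u ∈ l, u ≠ v) ∧
    l.head h = x ∧ l.getLast h = y

/-- Underlying undirected graph of the subdigraph induced by `X`. -/
def underUG (A : V → V → Prop) (X : Set V) : SimpleGraph X where
  Adj x y := x ≠ y ∧ (A x.1 y.1 ∨ A y.1 x.1)
  symm := by constructor; intro x y h; exact ⟨h.1.symm, h.2.symm⟩
  loopless := by constructor; intro x h; exact h.1 rfl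

/-- Number of weakly connected components of the subdigraph induced by `X`. -/
noncomputable def numWeakComp (A : V → V → Prop) (X : Set V) : ℕ :=
  Nat.card (underUG A X).ConnectedComponent

/-- `x` and `y` are consecutive (in this order) in the list `p`. -/
def ConsecIn (p : List V) (x y : V) : Prop :=
  ∃ l1 l2 : List V, p = l1 ++ x :: y :: l2

/-- There is no directed cycle all of whose vertices lie in `X`. -/
def DiAcyclicOn (A : V → V → Prop) (X : Set V) : Prop :=
  ¬ ∃ (l : List V) (h : l ≠ []), (∀ v ∈ l, v ∈ X) ∧ l.Nodup ∧ l.Chain' A ∧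
      A (l.getLast h) (l.head h)

/-! Label a vertex of `H` by the last `Z`-vertex preceding it on its path, or by the path
itself if there is none; there are at most `k + w` labels. Since `X` avoids `Z`, the label is
constant along the arcs of `H[X]`. Conversely, two `X`-vertices of one path with the same label
are joined by a `Z`-free subpath, which stays in `X` by guardedness, so they lie in the same
weak component. Hence the weak components inject into the labels. -/

theorem DiGuarded.forall_mem {A : V → V → Prop} {Z X : Set V} (hguard : DiGuarded A Z X)
    {l : List V} (hne : l ≠ []) (hch : l.IsChain A) (hZ : ∀ v ∈ l, v ∉ Z)
    (hhead : l.head hne ∈ X) (hlast : l.getLast hne ∈ X) : ∀ v ∈ l, v ∈ X := by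
  by_contra! ⟨v, hv, hvX⟩
  exact hguard ⟨l, hne, hch, hZ, hhead, hlast, v, hv, hZ v hv, hvX⟩

theorem underUG_reachable_of_rel {A : V → V → Prop} {S : Set V} {x y : V} (hx : x ∈ S)
    (hy : y ∈ S) (h : A x y) : (underUG A S).Reachable ⟨x, hx⟩ ⟨y, hy⟩ := by
  by_cases hxy : x = y
  · subst hxy; rfl
  · exact SimpleGraph.Adj.reachable ⟨fun h => hxy (congrArg Subtype.val h), Or.inl h⟩

theorem underUG_reachable_of_isChain {A : V → V → Prop} {S : Set V} {y : V} (hy : y ∈ S) :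
    ∀ {x : V} (hx : x ∈ S) {m : List V}, (x :: m ++ [y]).IsChain A → (∀ v ∈ m, v ∈ S) →
      (underUG A S).Reachable ⟨x, hx⟩ ⟨y, hy⟩
  | x, hx, [], hch, _ => underUG_reachable_of_rel hx hy (List.isChain_pair.mp hch)
  | x, hx, a :: m, hch, hm => by
    have ha : a ∈ S := hm a List.mem_cons_self
    exact (underUG_reachable_of_rel hx ha (List.isChain_cons_cons.mp hch).1).trans
      (underUG_reachable_of_isChain hy ha (List.isChain_cons_cons.mp hch).2
        fun v hv => hm v (List.mem_cons_of_mem a hv))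

theorem isChain_consecIn (l : List V) : l.IsChain (ConsecIn l) :=
  List.isChain_iff_forall_rel_of_append_cons_cons.mpr fun _ _ l₁ l₂ h => ⟨l₁, l₂, h⟩

theorem ConsecIn.of_infix {s l : List V} (hsl : s <:+: l) {x y : V} (h : ConsecIn s x y) :
    ConsecIn l x y := by
  obtain ⟨a, b, rfl⟩ := hsl
  obtain ⟨l₁, l₂, rfl⟩ := h
  exact ⟨a ++ l₁, l₂ ++ b, by simp⟩

section LastBefore

open Classical

variable (Z : Set V)

noncomputable def lastInSet (s : List V) : Option V := (s.filter (· ∈ Z)).getLast?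

noncomputable def lastBefore (l : List V) (x : V) : Option V :=
  lastInSet Z (l.takeWhile (· ≠ x))

variable {Z}

theorem mem_of_lastInSet_eq_some {s : List V} {z : V} (h : lastInSet Z s = some z) :
    z ∈ s ∧ z ∈ Z := by
  simpa using List.mem_of_getLast? h

theorem lastInSet_append_of_forall_notMem {s t : List V} (ht : ∀ v ∈ t, v ∉ Z) :
    lastInSet Z (s ++ t) = lastInSet Z s := by
  rw [lastInSet, lastInSet, List.filter_append,
    (List.filter_eq_nil_iff (l := t)).mpr (by simpa using ht), List.append_nil]

theorem forall_notMem_of_lastInSet_append_eq {s t : List V} (hst : s.Disjoint t)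
    (h : lastInSet Z (s ++ t) = lastInSet Z s) : ∀ v ∈ t, v ∉ Z := by
  by_contra! ⟨v, hvt, hvZ⟩
  have hne : t.filter (· ∈ Z) ≠ [] := List.ne_nil_of_mem (by simpa using ⟨hvt, hvZ⟩)
  obtain ⟨z, hz⟩ := Option.ne_none_iff_exists'.mp (mt List.getLast?_eq_none_iff.mp hne)
  have hzt : z ∈ t := (List.mem_filter.mp (List.mem_of_getLast? hz)).1
  rw [lastInSet, lastInSet, List.filter_append, List.getLast?_append_of_ne_nil _ hne, hz] at h
  exact hst (mem_of_lastInSet_eq_some h.symm).1 hzt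

theorem mem_of_lastBefore_eq_some {l : List V} {x z : V} (h : lastBefore Z l x = some z) :
    z ∈ l ∧ z ∈ Z :=
  ⟨(List.takeWhile_sublist _).subset (mem_of_lastInSet_eq_some h).1,
    (mem_of_lastInSet_eq_some h).2⟩

theorem lastBefore_append_cons {s t : List V} {x : V} (hx : x ∉ s) :
    lastBefore Z (s ++ x :: t) x = lastInSet Z s := by
  rw [lastBefore,
    List.takeWhile_append_of_pos (by simpa using fun v hv (hvx : v = x) => hx (hvx ▸ hv))]
  simp

theorem lastBefore_eq_of_consecIn {l : List V} (hl : l.Nodup) {x y : V} (h : ConsecIn l x y)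
    (hx : x ∉ Z) : lastBefore Z l y = lastBefore Z l x := by
  obtain ⟨s, t, rfl⟩ := h
  have hsxyt : s ++ x :: y :: t = s ++ [x] ++ y :: t := by simp
  have hxs : x ∉ s := fun h => List.disjoint_of_nodup_append hl h List.mem_cons_self
  have hys : y ∉ s ++ [x] := fun h =>
    List.disjoint_of_nodup_append (hsxyt ▸ hl) h List.mem_cons_self
  rw [lastBefore_append_cons hxs, hsxyt, lastBefore_append_cons hys,
    lastInSet_append_of_forall_notMem (by simpa using hx)]

end LastBefore

section GuardedPath

variable {A H : V → V → Prop} {Z X S : Set V} {l : List V}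

theorem reachable_of_lastBefore_eq_of_append (hXZ : Disjoint X Z) (hguard : DiGuarded A Z X)
    (hch : l.IsChain A) (hl : l.Nodup) (hH : ∀ a b, ConsecIn l a b → H a b)
    (hS : ∀ v ∈ l, v ∈ X → v ∈ S) {s m c : List V} {x y : V}
    (hsplit : l = s ++ x :: m ++ y :: c) (hxS : x ∈ S) (hyS : y ∈ S) (hxX : x ∈ X)
    (hyX : y ∈ X) (hkey : lastBefore Z l x = lastBefore Z l y) :
    (underUG H S).Reachable ⟨x, hxS⟩ ⟨y, hyS⟩ := by
  subst hsplit
  have hinfix : x :: m ++ [y] <:+: s ++ x :: m ++ y :: c := ⟨s, c, by simp⟩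
  have hl' : (s ++ x :: (m ++ y :: c)).Nodup := by simpa using hl
  have hxs : x ∉ s := fun h => List.disjoint_of_nodup_append hl' h List.mem_cons_self
  have hys : y ∉ s ++ x :: m := fun h => List.disjoint_of_nodup_append hl h List.mem_cons_self
  have hxm : s.Disjoint (x :: m) := List.disjoint_of_nodup_append (List.nodup_append.mp hl).1
  rw [lastBefore_append_cons hys, List.append_assoc, List.cons_append,
    lastBefore_append_cons hxs] at hkey
  have hxmZ := forall_notMem_of_lastInSet_append_eq hxm hkey.symm
  have hZ : ∀ v ∈ x :: m ++ [y], v ∉ Z := fun v hv =>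
    (List.mem_append.mp hv).elim (hxmZ v) fun hv =>
      List.mem_singleton.mp hv ▸ Set.disjoint_left.mp hXZ hyX
  have hX := hguard.forall_mem (by simp) (hch.infix hinfix) hZ (by simpa) (by simpa)
  exact underUG_reachable_of_isChain hyS hxS
    ((isChain_consecIn _).imp fun a b h => hH a b (h.of_infix hinfix))
    fun v hv => hS v (hinfix.subset (by simp [hv])) (hX v (by simp [hv]))

theorem reachable_of_lastBefore_eq (hXZ : Disjoint X Z) (hguard : DiGuarded A Z X)
    (hch : l.IsChain A) (hl : l.Nodup) (hH : ∀ a b, ConsecIn l a b → H a b)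
    (hS : ∀ v ∈ l, v ∈ X → v ∈ S) (hSX : S ⊆ X) {x y : V} (hxl : x ∈ l) (hyl : y ∈ l)
    (hxS : x ∈ S) (hyS : y ∈ S) (hkey : lastBefore Z l x = lastBefore Z l y) :
    (underUG H S).Reachable ⟨x, hxS⟩ ⟨y, hyS⟩ := by
  obtain ⟨s, t, hsplit⟩ := List.append_of_mem hxl
  rw [hsplit, List.mem_append, List.mem_cons] at hyl
  rcases hyl with hys | rfl | hyt
  · obtain ⟨s', m, rfl⟩ := List.append_of_mem hys
    exact (reachable_of_lastBefore_eq_of_append hXZ hguard hch hl hH hS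
      (s := s') (m := m) (c := t) (by simp [hsplit]) hyS hxS (hSX hyS) (hSX hxS) hkey.symm).symm
  · exact SimpleGraph.Reachable.refl _
  · obtain ⟨m, c, rfl⟩ := List.append_of_mem hyt
    exact reachable_of_lastBefore_eq_of_append hXZ hguard hch hl hH hS
      (s := s) (m := m) (c := c) (by simp [hsplit]) hxS hyS (hSX hxS) (hSX hyS) hkey

end GuardedPath

theorem SimpleGraph.card_connectedComponent_le_of_sum {α ι β : Type*} [Finite ι]
    {G : SimpleGraph α} (F : α → ι ⊕ β) (hadj : ∀ v u, G.Adj v u → F v = F u)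
    (hreach : ∀ v u, F v = F u → G.Reachable v u) {T : Set β} (hT : T.Finite)
    (hF : ∀ v b, F v = .inr b → b ∈ T) :
    Nat.card G.ConnectedComponent ≤ Nat.card ι + T.ncard := by
  have hwalk : ∀ {v u} (q : G.Walk v u), F v = F u := by
    intro v u q
    induction q with
    | nil => rfl
    | cons h _ ih => exact (hadj _ _ h).trans ih
  let F' : G.ConnectedComponent → ι ⊕ β := SimpleGraph.ConnectedComponent.lift F
    fun _ _ q _ => hwalk q
  have hinj : Function.Injective F' := fun c d =>
    SimpleGraph.ConnectedComponent.ind₂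
      (fun v u h => SimpleGraph.ConnectedComponent.eq.mpr (hreach v u h)) c d
  have hmaps : ∀ c ∈ Set.univ, F' c ∈ Set.range Sum.inl ∪ Sum.inr '' T := by
    refine fun c _ => c.ind fun v => ?_
    rcases hv : F v with i | b
    · exact Or.inl ⟨i, hv.symm⟩
    · exact Or.inr ⟨b, hF v b hv, hv.symm⟩
  calc Nat.card G.ConnectedComponent
      = (Set.univ : Set G.ConnectedComponent).ncard := (Set.ncard_univ _).symm
    _ ≤ (Set.range Sum.inl ∪ Sum.inr '' T).ncard :=
        Set.ncard_le_ncard_of_injOn F' hmaps hinj.injOn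
          ((Set.finite_range _).union (hT.image _))
    _ ≤ (Set.range (Sum.inl : ι → ι ⊕ β)).ncard + (Sum.inr '' T).ncard := Set.ncard_union_le _ _
    _ = Nat.card ι + T.ncard := by
        rw [Set.ncard_range_of_injective Sum.inl_injective,
          Set.ncard_image_of_injective _ Sum.inr_injective]

section PathKey

variable {ι : Type*} (Z : Set V) (p : ι → List V)

noncomputable def pathKey (i : ι) (v : V) : ι ⊕ V :=
  (lastBefore Z (p i) v).elim (.inl i) .inr

variable {Z p}

theorem mem_of_pathKey_eq_inr {i : ι} {v z : V} (h : pathKey Z p i v = .inr z) : z ∈ Z := by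
  rcases hv : lastBefore Z (p i) v with _ | z'
  · simp [pathKey, hv] at h
  · simp only [pathKey, hv, Option.elim_some, Sum.inr.injEq] at h
    exact h ▸ (mem_of_lastBefore_eq_some hv).2

theorem pathKey_eq_pathKey (hdisj : ∀ i j, i ≠ j → ∀ v ∈ p i, v ∉ p j) {i j : ι} {x y : V}
    (h : pathKey Z p i x = pathKey Z p j y) :
    i = j ∧ lastBefore Z (p i) x = lastBefore Z (p j) y := by
  rcases hx : lastBefore Z (p i) x with _ | z <;> rcases hy : lastBefore Z (p j) y with _ | z' <;>
    simp only [pathKey, hx, hy, Option.elim_none, Option.elim_some, Sum.inl.injEq,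
      Sum.inr.injEq, reduceCtorEq] at h
  · exact ⟨h, rfl⟩
  · subst h
    refine ⟨by_contra fun hij => hdisj i j hij z ?_ ?_, rfl⟩
    exacts [(mem_of_lastBefore_eq_some hx).1, (mem_of_lastBefore_eq_some hy).1]

end PathKey

theorem stmt1 [Fintype V] (A : V → V → Prop) (Z X : Set V) (w k : ℕ)
    (hZcard : Z.ncard = w) (hXZ : Disjoint X Z) (hguard : DiGuarded A Z X)
    (p : Fin k → List V)
    (hchain : ∀ i, (p i).Chain' A)
    (hnodup : ∀ i, (p i).Nodup)
    (hdisj : ∀ i j, i ≠ j → ∀ v ∈ p i, v ∉ p j) :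
    numWeakComp (fun x y => ∃ i, ConsecIn (p i) x y)
      ({v | ∃ i, v ∈ p i} ∩ X) ≤ k + w := by
  set S : Set V := {v | ∃ i, v ∈ p i} ∩ X
  choose idx hidx using fun v : S => v.2.1
  have hidx_eq : ∀ (v : S) i, v.1 ∈ p i → idx v = i := fun v i hv =>
    by_contra fun h => hdisj _ _ h v (hidx v) hv
  have hconsec : ∀ (v u : S) i, ConsecIn (p i) v u →
      pathKey Z p (idx v) v = pathKey Z p (idx u) u := by
    rintro v u i ⟨l₁, l₂, hl⟩
    rw [hidx_eq v i (by simp [hl]), hidx_eq u i (by simp [hl]), pathKey, pathKey,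
      lastBefore_eq_of_consecIn (hnodup i) ⟨l₁, l₂, hl⟩ (Set.disjoint_left.mp hXZ v.2.2)]
  refine (SimpleGraph.card_connectedComponent_le_of_sum (fun v => pathKey Z p (idx v) v)
    ?_ ?_ Z.toFinite fun _ _ => mem_of_pathKey_eq_inr).trans (by simp [hZcard])
  · rintro v u ⟨-, ⟨i, h⟩ | ⟨i, h⟩⟩
    exacts [hconsec v u i h, (hconsec u v i h).symm]
  · intro v u h
    obtain ⟨hi, hkey⟩ := pathKey_eq_pathKey hdisj h
    exact reachable_of_lastBefore_eq (H := fun x y => ∃ i, ConsecIn (p i) x y) (S := S)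
      hXZ hguard (hchain (idx v)) (hnodup _) (fun a b h => ⟨_, h⟩)
      (fun a ha haX => ⟨⟨_, ha⟩, haX⟩) (fun _ ha => ha.2) (hidx v) (hi ▸ hidx u) v.2 u.2
      (hi ▸ hkey)
end

section
/- Let D be a unilateral digraph, meaning that for every two distinct vertices u, v there is a directed walk from u to v or a directed walk from v to u. If X ⊆ V(D) is ∅-guarded (i.e., no directed walk in D starts and ends in X while using a vertex outside X) and X is nonempty, then the subdigraph of D induced by X is weakly connected. -/
/-! Unilaterality joins any two vertices of `X` by a directed walk in one of the two directions,
and `∅`-guardedness forces such a walk to stay inside `X`, so it is a walk of the induced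
subdigraph and its consecutive vertices are adjacent (or equal) in the underlying graph. -/

variable {V : Type*}

open Relation

section

variable {A : V → V → Prop} {X : Set V}

theorem underUG_reachable_of_reflTransGen {x y : X}
    (h : ReflTransGen (fun a b : X => A a b) x y) : (underUG A X).Reachable x y := by
  rw [SimpleGraph.reachable_iff_reflTransGen]
  refine reflTransGen_closed (fun a b hab => ?_) _ _ h
  by_cases hne : a = b
  · exact hne ▸ .refl
  · exact .single ⟨hne, .inl hab⟩

theorem reflTransGen_subtype_of_isChain {l : List V} (hl : l ≠ []) (hX : ∀ v ∈ l, v ∈ X)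
    (hA : l.IsChain A) :
    ReflTransGen (fun a b : X => A a b) ⟨l.head hl, hX _ (l.head_mem hl)⟩
      ⟨l.getLast hl, hX _ (l.getLast_mem hl)⟩ := by
  have hchain : (l.attachWith (· ∈ X) hX).IsChain (fun a b : X => A a b) :=
    (List.isChain_attachWith hX).2 <| (List.IsChain.iff_mem.1 hA).imp
      fun _ _ ⟨ha, hb, hab⟩ => ⟨hX _ ha, hX _ hb, hab⟩
  have := List.relationReflTransGen_of_exists_isChain _ hchain (by simpa using hl)
  rwa [List.head_attachWith, List.getLast_attachWith] at this

theorem DiGuarded.forall_mem_of_isChain {Z : Set V} (hg : DiGuarded A Z X) {l : List V}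
    (hl : l ≠ []) (hA : l.IsChain A) (hZ : ∀ v ∈ l, v ∉ Z) (hhead : l.head hl ∈ X)
    (hlast : l.getLast hl ∈ X) : ∀ v ∈ l, v ∈ X := by
  by_contra! ⟨v, hv, hvX⟩
  exact hg ⟨l, hl, hA, hZ, hhead, hlast, v, hv, hZ v hv, hvX⟩

theorem DiGuarded.reachable_of_diReaches (hg : DiGuarded A ∅ X) {u v : V} (hu : u ∈ X)
    (hv : v ∈ X) (h : DiReaches A u v) : (underUG A X).Reachable ⟨u, hu⟩ ⟨v, hv⟩ := by
  obtain ⟨l, hl, hA, rfl, rfl⟩ := h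
  exact underUG_reachable_of_reflTransGen <| reflTransGen_subtype_of_isChain hl
    (hg.forall_mem_of_isChain hl hA (fun _ _ => id) hu hv) hA

end

theorem stmt2 (A : V → V → Prop)
    (huni : ∀ u v : V, u ≠ v → DiReaches A u v ∨ DiReaches A v u)
    (X : Set V) (hne : X.Nonempty) (hguard : DiGuarded A ∅ X) :
    (underUG A X).Connected := by
  refine (SimpleGraph.connected_iff _).2 ⟨?_, hne.to_subtype⟩
  rintro ⟨x, hx⟩ ⟨y, hy⟩
  by_cases hxy : x = y
  · subst hxy; rfl
  rcases huni x y hxy with h | h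
  · exact hguard.reachable_of_diReaches hx hy h
  · exact (hguard.reachable_of_diReaches hy hx h).symm
end

section
/- Let D be a digraph, v ∈ V(D), and c ≥ 1. Suppose V(D) \ {v} can be partitioned into c sets P_1, …, P_c such that for every i and every two distinct vertices x, y ∈ P_i there is a directed walk from x to y or from y to x in D − v. Then for every {v}-guarded set X ⊆ V(D) \ {v}, the subdigraph of D induced by X has at most c weakly connected components. -/
variable {V : Type*}

/-! A walk in `D − v` between two vertices of a `{v}`-guarded set `X` cannot leave `X`, so it
is a walk of the subdigraph induced by `X` and its ends lie in one weak component. Hence two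
vertices of `X` in the same part `P i` share a weak component, and choosing for each vertex of
`X` the part containing it maps the weak components of `X` injectively into the `c` parts. -/

namespace SimpleGraph

lemma card_connectedComponent_le_of_reachable {W ι : Type*} [Finite ι] (G : SimpleGraph W)
    (p : W → ι) (hp : ∀ x y, p x = p y → G.Reachable x y) :
    Nat.card G.ConnectedComponent ≤ Nat.card ι := by
  choose rep hrep using fun C : G.ConnectedComponent => C.exists_rep
  refine Nat.card_le_card_of_injective (p ∘ rep) fun C D h => ?_
  rw [← hrep C, ← hrep D]
  exact ConnectedComponent.sound (hp _ _ h)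

end SimpleGraph

section

variable {A : V → V → Prop} {X : Set V}

lemma underUG_reachable_of_rel_s3 {x y : X} (h : A x y) : (underUG A X).Reachable x y := by
  by_cases hxy : x = y
  · exact hxy ▸ .refl _
  · exact SimpleGraph.Adj.reachable ⟨hxy, .inl h⟩

lemma underUG_reachable_of_chain : ∀ {l : List V} (hne : l ≠ []), l.IsChain A →
    (∀ u ∈ l, u ∈ X) → ∀ {x y : X}, l.head hne = x → l.getLast hne = y →
    (underUG A X).Reachable x y
  | [_], _, _, _, x, y, hx, hy => by
    rw [Subtype.ext (hx.symm.trans hy : x.1 = y.1)]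
  | a :: b :: t, _, hch, hall, x, y, hx, hy => by
    obtain ⟨hab, htail⟩ := List.isChain_cons_cons.mp hch
    have hxb : A x b := by rw [← show a = x from hx]; exact hab
    exact (underUG_reachable_of_rel_s3 (y := ⟨b, hall b (by simp)⟩) hxb).trans <|
      underUG_reachable_of_chain (List.cons_ne_nil b t) htail
        (fun u hu => hall u (List.mem_cons_of_mem a hu)) rfl (by simpa using hy)

lemma DiGuarded.underUG_reachable {v : V} (hguard : DiGuarded A {v} X) {x y : X}
    (h : DiReachesAvoid A v x y) : (underUG A X).Reachable x y := by
  obtain ⟨l, hne, hch, hav, hx, hy⟩ := h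
  have hsub : ∀ u ∈ l, u ∈ X := by
    by_contra! ⟨u, hu, huX⟩
    exact hguard ⟨l, hne, hch, hav, hx ▸ x.2, hy ▸ y.2, u, hu, hav u hu, huX⟩
  exact underUG_reachable_of_chain hne hch hsub hx hy

end

theorem stmt3_general (A : V → V → Prop) (v : V) (c : ℕ)
    (P : Fin c → Set V)
    (hcover : (⋃ i, P i) = {v}ᶜ)
    (hpart : ∀ i, ∀ x ∈ P i, ∀ y ∈ P i, x ≠ y →
      DiReachesAvoid A v x y ∨ DiReachesAvoid A v y x)
    (X : Set V) (hXv : v ∉ X) (hguard : DiGuarded A {v} X) :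
    numWeakComp A X ≤ c := by
  have hmem : ∀ x : X, ∃ i, x.1 ∈ P i := fun x =>
    Set.mem_iUnion.mp (hcover ▸ fun h : x.1 = v => hXv (h ▸ x.2))
  choose part hpartX using hmem
  calc numWeakComp A X ≤ Nat.card (Fin c) := by
        refine (underUG A X).card_connectedComponent_le_of_reachable part fun x y hxy => ?_
        by_cases hne : x = y
        · exact hne ▸ .refl _
        rcases hpart _ _ (hpartX x) _ (hxy ▸ hpartX y) (Subtype.coe_ne_coe.mpr hne) with h | h
        · exact hguard.underUG_reachable h
        · exact (hguard.underUG_reachable h).symm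
    _ = c := Nat.card_fin c

theorem stmt3 (A : V → V → Prop) (v : V) (c : ℕ) (hc : 1 ≤ c)
    (P : Fin c → Set V)
    (hdisjP : ∀ i j, i ≠ j → Disjoint (P i) (P j))
    (hcover : (⋃ i, P i) = {v}ᶜ)
    (hpart : ∀ i, ∀ x ∈ P i, ∀ y ∈ P i, x ≠ y →
      DiReachesAvoid A v x y ∨ DiReachesAvoid A v y x)
    (X : Set V) (hXv : v ∉ X) (hguard : DiGuarded A {v} X) :
    numWeakComp A X ≤ c :=
  stmt3_general A v c P hcover hpart X hXv hguard
end
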